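/- arXiv:1702.05195 — 3 statements merged into one kernel-verified Lean document; each statement's English description precedes it below -/
import Mathlib

section
/- Let φ be the standard normal density and γ(·;c) the density γ(μ;c) = γ₀(μ−c) where γ₀ is the standard double-exponential density (or more generally any symmetric unimodal density). For c ≥ 0, define g(x;c) = ∫ φ(x−μ) γ(μ;c) dμ. Then the ratio g(x;c)/φ(x) is strictly increasing in x on the interval (c, ∞). -/
/-!
Since `φ(x - μ) = φ(x) e^{xμ - μ²/2}`, the ratio `g(x;c)/φ(x)` is `∫ e^{xμ - μ²/2} γ₀(μ - c) dμ`.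
Substituting `μ = c + t` and averaging `t` with `-t` (`γ₀` is even) turns the integrand into
`e^{xc - c²/2 - t²/2} cosh(t(x - c)) γ₀(t)`. For `c ≥ 0` this kernel is nondecreasing in `x` on
`(c, ∞)` for every `t`, and strictly increasing for `t ≠ 0`; since `γ₀ ≥ 0` has nonzero integral,
the point `t = 0` cannot absorb all its mass, so the integral is strictly increasing.
-/

open MeasureTheory Real

/-- Standard normal density. -/
noncomputable def stdN (x : ℝ) : ℝ := (Real.sqrt (2 * Real.pi))⁻¹ * Real.exp (-x ^ 2 / 2)

/-- Convolution `g(x;c) = ∫ φ(x−μ) γ₀(μ−c) dμ`. -/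
noncomputable def conv (γ₀ : ℝ → ℝ) (c x : ℝ) : ℝ := ∫ μ : ℝ, stdN (x - μ) * γ₀ (μ - c)

section StrictIntegralComparison

variable {α : Type*} [MeasurableSpace α] {μ : Measure α}

theorem integral_lt_integral_of_le_of_measure_setOf_lt_ne_zero {f g : α → ℝ}
    (hf : Integrable f μ) (hg : Integrable g μ) (hle : ∀ a, f a ≤ g a)
    (hlt : μ {a | f a < g a} ≠ 0) : ∫ a, f a ∂μ < ∫ a, g a ∂μ := by
  rw [← sub_pos, ← integral_sub hg hf,
    integral_pos_iff_support_of_nonneg (fun a => sub_nonneg.2 (hle a)) (hg.sub hf)]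
  refine pos_iff_ne_zero.2 (mt (measure_mono_null fun a ha => ?_) hlt)
  exact (sub_pos.2 ha.out).ne'

theorem integral_mul_lt_integral_mul [NullSingletonClass μ]
    {k₁ k₂ w : α → ℝ} (a₀ : α) (hw : ∀ a, 0 ≤ w a) (hw₀ : ∫ a, w a ∂μ ≠ 0)
    (h₁ : Integrable (fun a => k₁ a * w a) μ) (h₂ : Integrable (fun a => k₂ a * w a) μ)
    (hle : ∀ a, k₁ a ≤ k₂ a) (hlt : ∀ a, a ≠ a₀ → k₁ a < k₂ a) :
    ∫ a, k₁ a * w a ∂μ < ∫ a, k₂ a * w a ∂μ := by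
  have hsupport : μ (Function.support w) ≠ 0 := fun h =>
    hw₀ (integral_eq_zero_of_ae (μ.measure_support_eq_zero_iff.1 h))
  refine integral_lt_integral_of_le_of_measure_setOf_lt_ne_zero h₁ h₂
    (fun a => mul_le_mul_of_nonneg_right (hle a) (hw a)) fun h => hsupport ?_
  have hnull : μ ({a | k₁ a * w a < k₂ a * w a} ∪ {a₀}) = 0 :=
    measure_union_null h (measure_singleton a₀)
  refine measure_mono_null (fun a ha => ?_) hnull
  by_cases ha₀ : a = a₀
  · exact Or.inr ha₀
  · exact Or.inl (mul_lt_mul_of_pos_right (hlt a ha₀) ((hw a).lt_of_ne' ha))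

end StrictIntegralComparison

section EvenWeight

variable {f w : ℝ → ℝ}

theorem integral_mul_even_eq_integral_average_mul (hw : ∀ t, w (-t) = w t)
    (hf : Integrable (fun t => f t * w t)) :
    ∫ t, f t * w t = ∫ t, (f t + f (-t)) / 2 * w t := by
  have hf_neg : Integrable (fun t => f (-t) * w t) := by
    simpa only [neg_neg, hw] using hf.comp_neg
  have hflip : ∫ t, f (-t) * w t = ∫ t, f t * w t := by
    simpa only [neg_neg, hw] using integral_neg_eq_self (fun t => f t * w t) volume
  calc ∫ t, f t * w t = ((∫ t, f t * w t) + ∫ t, f (-t) * w t) / 2 := by rw [hflip]; ring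
    _ = ∫ t, (f t * w t + f (-t) * w t) / 2 := by rw [integral_div, integral_add hf hf_neg]
    _ = ∫ t, (f t + f (-t)) / 2 * w t := by congr 1; ext t; ring

end EvenWeight

theorem stdN_pos (x : ℝ) : 0 < stdN x :=
  mul_pos (inv_pos.2 (sqrt_pos.2 (by positivity))) (exp_pos _)

theorem stdN_sub (x μ : ℝ) : stdN (x - μ) = stdN x * exp (x * μ - μ ^ 2 / 2) := by
  rw [stdN, stdN, mul_assoc, ← exp_add]
  ring_nf

theorem conv_div_stdN (γ₀ : ℝ → ℝ) (c x : ℝ) :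
    conv γ₀ c x / stdN x = ∫ t, exp (x * (t + c) - (t + c) ^ 2 / 2) * γ₀ t := by
  have hconv : conv γ₀ c x = stdN x * ∫ μ, exp (x * μ - μ ^ 2 / 2) * γ₀ (μ - c) := by
    simp only [conv, stdN_sub, mul_assoc, integral_const_mul]
  rw [hconv, mul_div_cancel_left₀ _ (stdN_pos x).ne',
    ← integral_add_right_eq_self _ c]
  simp only [add_sub_cancel_right]

theorem integrable_exp_mul_sub_sq_mul {γ : ℝ → ℝ} (hγ : Integrable γ) (x : ℝ) (u : ℝ → ℝ)
    (hu : Continuous u) : Integrable (fun t => exp (x * u t - u t ^ 2 / 2) * γ t) := by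
  refine hγ.bdd_mul (c := exp (x ^ 2 / 2)) (Continuous.aestronglyMeasurable (by fun_prop))
    (Filter.Eventually.of_forall fun t => ?_)
  rw [norm_of_nonneg (exp_pos _).le]
  exact exp_le_exp.2 (by nlinarith [sq_nonneg (x - u t)])

/-- Half of the paper's `h(x, c + t; c)`. -/
noncomputable def tiltKernel (c x t : ℝ) : ℝ :=
  exp (x * c - c ^ 2 / 2 - t ^ 2 / 2) * cosh (t * (x - c))

theorem tiltKernel_eq (c x t : ℝ) :
    tiltKernel c x t =
      (exp (x * (t + c) - (t + c) ^ 2 / 2) + exp (x * (-t + c) - (-t + c) ^ 2 / 2)) / 2 := by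
  rw [tiltKernel, cosh_eq, mul_div_assoc', mul_add, ← exp_add, ← exp_add]
  congr 3 <;> ring

theorem tiltKernel_le_tiltKernel {c x y : ℝ} (hc : 0 ≤ c) (hx : c ≤ x) (hxy : x ≤ y) (t : ℝ) :
    tiltKernel c x t ≤ tiltKernel c y t := by
  have hexp : exp (x * c - c ^ 2 / 2 - t ^ 2 / 2) ≤ exp (y * c - c ^ 2 / 2 - t ^ 2 / 2) :=
    exp_le_exp.2 (by nlinarith)
  have hcosh : cosh (t * (x - c)) ≤ cosh (t * (y - c)) := by
    rw [cosh_le_cosh, abs_mul, abs_mul, abs_of_nonneg (sub_nonneg.2 hx),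
      abs_of_nonneg (by linarith : 0 ≤ y - c)]
    gcongr
  exact mul_le_mul hexp hcosh (cosh_pos _).le (exp_pos _).le

theorem tiltKernel_lt_tiltKernel {c x y t : ℝ} (hc : 0 ≤ c) (hx : c ≤ x) (hxy : x < y)
    (ht : t ≠ 0) : tiltKernel c x t < tiltKernel c y t := by
  have hexp : exp (x * c - c ^ 2 / 2 - t ^ 2 / 2) ≤ exp (y * c - c ^ 2 / 2 - t ^ 2 / 2) :=
    exp_le_exp.2 (by nlinarith)
  have hcosh : cosh (t * (x - c)) < cosh (t * (y - c)) := by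
    rw [cosh_lt_cosh, abs_mul, abs_mul, abs_of_nonneg (sub_nonneg.2 hx),
      abs_of_nonneg (by linarith : 0 ≤ y - c)]
    exact mul_lt_mul_of_pos_left (by linarith) (abs_pos.2 ht)
  exact mul_lt_mul' hexp hcosh (cosh_pos _).le (exp_pos _)

theorem conv_div_stdN_eq_integral_tiltKernel {γ₀ : ℝ → ℝ} (hint : Integrable γ₀)
    (hsymm : ∀ u, γ₀ (-u) = γ₀ u) (c x : ℝ) :
    conv γ₀ c x / stdN x = ∫ t, tiltKernel c x t * γ₀ t := by
  rw [conv_div_stdN, integral_mul_even_eq_integral_average_mul hsymm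
    (integrable_exp_mul_sub_sq_mul hint x (· + c) (by fun_prop))]
  simp only [tiltKernel_eq]

theorem integrable_tiltKernel_mul {γ₀ : ℝ → ℝ} (hint : Integrable γ₀) (c x : ℝ) :
    Integrable (fun t => tiltKernel c x t * γ₀ t) := by
  refine (((integrable_exp_mul_sub_sq_mul hint x (· + c) (by fun_prop)).add
    (integrable_exp_mul_sub_sq_mul hint x (-· + c) (by fun_prop))).div_const 2).congr
    (Filter.Eventually.of_forall fun t => ?_)
  simp only [Pi.add_apply, tiltKernel_eq]
  ring

theorem stmt0_general (γ₀ : ℝ → ℝ) (hnonneg : ∀ u, 0 ≤ γ₀ u)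
    (hint : Integrable γ₀) (hdens : ∫ u : ℝ, γ₀ u = 1)
    (hsymm : ∀ u, γ₀ (-u) = γ₀ u)
    (c : ℝ) (hc : 0 ≤ c) :
    StrictMonoOn (fun x => conv γ₀ c x / stdN x) (Set.Ioi c) := by
  intro x hx y _ hxy
  simp only [conv_div_stdN_eq_integral_tiltKernel hint hsymm]
  exact integral_mul_lt_integral_mul 0 hnonneg (by simp [hdens])
    (integrable_tiltKernel_mul hint c x) (integrable_tiltKernel_mul hint c y)
    (tiltKernel_le_tiltKernel hc (le_of_lt hx) hxy.le)
    (fun t ht => tiltKernel_lt_tiltKernel hc (le_of_lt hx) hxy ht)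

/-- For a symmetric unimodal density `γ₀` and `c ≥ 0`, the ratio `g(x;c)/φ(x)` is
strictly increasing in `x` on `(c, ∞)`. -/
theorem stmt0 (γ₀ : ℝ → ℝ) (hmeas : Measurable γ₀) (hnonneg : ∀ u, 0 ≤ γ₀ u)
    (hint : Integrable γ₀) (hdens : ∫ u : ℝ, γ₀ u = 1)
    (hsymm : ∀ u, γ₀ (-u) = γ₀ u)
    (hunimodal : ∀ u v : ℝ, |u| ≤ |v| → γ₀ v ≤ γ₀ u)
    (c : ℝ) (hc : 0 ≤ c) :
    StrictMonoOn (fun x => conv γ₀ c x / stdN x) (Set.Ioi c) :=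
  stmt0_general γ₀ hnonneg hint hdens hsymm c hc
end

section
/- Let δ(x;w,b,c) be the posterior median under the spike-and-slab prior, assumed to be a monotone thresholding rule: δ = 0 exactly on [−t₂, t₁] with t₁,t₂ > 0, and strictly increasing outside this interval with well-defined inverse δ^{-1}(t) for t ≠ 0. Define the penalty P(θ) = ∫₀^θ (δ^{-1}(t) − t) dt for θ ≠ 0 and P(0) = 0. Then for every x ∈ ℝ, the minimizer of θ ↦ (x−θ)²/2 + P(θ) equals δ(x;w,b,c). -/
/-!
Writing `s = δ x`, the increment of the objective from `s` to `θ` is `∫ₛ^θ (δ⁻¹(t) − x) dt`.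
Monotonicity of `δ` gives `δ⁻¹(t) > x` for `t > s` and `δ⁻¹(t) < x` for `t < s` (away from `t = 0`),
so this integral is nonnegative whichever side of `s` the point `θ` lies on.
-/

open MeasureTheory

/-- The penalty `P(θ) = ∫₀^θ (δ⁻¹(t) − t) dt` for `θ ≠ 0`, and `P(0) = 0`. -/
noncomputable def pen (δinv : ℝ → ℝ) (θ : ℝ) : ℝ :=
  if θ = 0 then 0 else ∫ t in (0:ℝ)..θ, (δinv t - t)

theorem pen_eq_integral (g : ℝ → ℝ) (θ : ℝ) : pen g θ = ∫ t in (0 : ℝ)..θ, (g t - t) := by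
  unfold pen
  split_ifs with h
  · simp [h]
  · rfl

theorem integral_sub_const_eq_sub_half_sq_add_integral {g : ℝ → ℝ} {x s θ : ℝ}
    (hs : IntervalIntegrable (fun t => g t - t) volume 0 s)
    (hθ : IntervalIntegrable (fun t => g t - t) volume 0 θ) :
    ∫ t in s..θ, (g t - x) =
      ((x - θ) ^ 2 / 2 + ∫ t in (0 : ℝ)..θ, (g t - t)) -
        ((x - s) ^ 2 / 2 + ∫ t in (0 : ℝ)..s, (g t - t)) := by
  have hlin : ∫ t in s..θ, (t - x) = (x - θ) ^ 2 / 2 - (x - s) ^ 2 / 2 := by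
    rw [intervalIntegral.integral_sub intervalIntegral.intervalIntegrable_id
      intervalIntegrable_const, integral_id, intervalIntegral.integral_const, smul_eq_mul]
    ring
  calc ∫ t in s..θ, (g t - x) = ∫ t in s..θ, ((g t - t) + (t - x)) := by
        simp only [sub_add_sub_cancel]
    _ = (∫ t in s..θ, (g t - t)) + ∫ t in s..θ, (t - x) :=
        intervalIntegral.integral_add (hs.symm.trans hθ)
          ((continuous_id.sub continuous_const).intervalIntegrable s θ)
    _ = _ := by
        rw [← intervalIntegral.integral_interval_sub_left hθ hs, hlin]
        ring

theorem intervalIntegral_nonneg_of_ae_sign {μ : Measure ℝ} [NullSingletonClass μ] {f : ℝ → ℝ}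
    {s θ : ℝ}
    (hright : ∀ᵐ t ∂μ, s < t → 0 ≤ f t) (hleft : ∀ᵐ t ∂μ, t < s → f t ≤ 0) :
    0 ≤ ∫ t in s..θ, f t ∂μ := by
  rcases le_total s θ with h | h
  · rw [intervalIntegral.integral_of_le h]
    refine setIntegral_nonneg_ae measurableSet_Ioc ?_
    filter_upwards [hright] with t ht hmem using ht hmem.1
  · rw [intervalIntegral.integral_of_ge h, neg_nonneg]
    refine setIntegral_nonpos_ae measurableSet_Ioc ?_
    filter_upwards [hleft, μ.ae_ne s] with t ht hne hmem using ht (hmem.2.lt_of_ne hne)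

theorem stmt6_general (δ δinv : ℝ → ℝ) (hmono : Monotone δ)
    (hinv₁ : ∀ t : ℝ, t ≠ 0 → δ (δinv t) = t)
    (hint : ∀ θ : ℝ, IntervalIntegrable (fun t => δinv t - t) volume 0 θ) :
    ∀ x : ℝ, IsMinOn (fun θ => (x - θ) ^ 2 / 2 + pen δinv θ) Set.univ (δ x) := by
  intro x θ _
  have hright : ∀ᵐ t, δ x < t → 0 ≤ δinv t - x := by
    filter_upwards [volume.ae_ne 0] with t ht hlt
    exact sub_nonneg.2 (hmono.reflect_lt (by rwa [hinv₁ t ht])).le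
  have hleft : ∀ᵐ t, t < δ x → δinv t - x ≤ 0 := by
    filter_upwards [volume.ae_ne 0] with t ht hlt
    exact sub_nonpos.2 (hmono.reflect_lt (by rwa [hinv₁ t ht])).le
  have hincr := integral_sub_const_eq_sub_half_sq_add_integral (x := x) (hint (δ x)) (hint θ)
  have hnonneg := intervalIntegral_nonneg_of_ae_sign (θ := θ) hright hleft
  simp only [Set.mem_ofPred_eq, pen_eq_integral]
  linarith

/-- If `δ` is a continuous monotone thresholding rule, zero exactly on `[−t₂,t₁]`,
strictly increasing outside, with `δ(x) ≤ x` beyond `t₁` and `δ(x) ≥ x` below `−t₂`,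
and `δinv` inverts it away from `0`, then for every `x` the minimizer of
`θ ↦ (x−θ)²/2 + P(θ)` over `ℝ` is `δ(x)`. -/
theorem stmt6 (δ δinv : ℝ → ℝ) (t₁ t₂ : ℝ) (ht₁ : 0 < t₁) (ht₂ : 0 < t₂)
    (hcont : Continuous δ) (hmono : Monotone δ)
    (hzero : ∀ x : ℝ, δ x = 0 ↔ x ∈ Set.Icc (-t₂) t₁)
    (hsm₁ : StrictMonoOn δ (Set.Iic (-t₂))) (hsm₂ : StrictMonoOn δ (Set.Ici t₁))
    (hle : ∀ x : ℝ, t₁ < x → δ x ≤ x) (hge : ∀ x : ℝ, x < -t₂ → x ≤ δ x)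
    (hinv₁ : ∀ t : ℝ, t ≠ 0 → δ (δinv t) = t)
    (hinv₂ : ∀ x : ℝ, t₁ < x ∨ x < -t₂ → δinv (δ x) = x)
    (hint : ∀ θ : ℝ, IntervalIntegrable (fun t => δinv t - t) volume 0 θ) :
    ∀ x : ℝ, IsMinOn (fun θ => (x - θ) ^ 2 / 2 + pen δinv θ) Set.univ (δ x) :=
  stmt6_general δ δinv hmono hinv₁ hint
end

section
/- Consider the weighted least squares problem: given weights Q_i > 0 and targets z_i = (Y_i − c/σ_i)² − 1, let (τ̃_1,…,τ̃_p) minimize Σᵢ Q_i(z_i − τ_i)² subject to the isotonic constraint τ_i ≤ τ_j whenever σ_i ≥ σ_j. Then (τ̂_1,…,τ̂_p) with τ̂_i = max(τ̃_i, 0) solves the optimization problem: minimize Σᵢ Q_i{log(1+τ_i) + (Y_i − c/σ_i)²/(1+τ_i)} subject to 0 ≤ τ_i ≤ τ_j whenever σ_i ≥ σ_j. -/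
open BigOperators Finset Filter Topology

/-!
`τ̃` is the weighted projection of `z` onto the convex cone `K` of vectors ordered oppositely to
`σ`, so the residual `Q (z - τ̃)` satisfies `⟨Q (z - τ̃), y - τ̃⟩ ≤ 0` for every `y ∈ K`. Since
`K` is stable under `τ ↦ τ ± h ∘ τ` for every `1`-Lipschitz `h`, the residual is orthogonal to
`h ∘ τ̃`; we use `h t = (1 + max t 0)⁻¹ = (1 + τ̂)⁻¹`.

In the variable `s = -(1 + τ)⁻¹` the summand `log (1 + τ) + w / (1 + τ)` becomes
`-log (-s) - w s`, which is convex with derivative `τ - z`. Its tangent-line inequality at `τ̂`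
bounds the objective at any feasible `x` from below by the objective at `τ̂` plus
`∑ Q (τ̂ - z) ((1 + τ̂)⁻¹ - (1 + x)⁻¹)`, and this sum is nonnegative by the orthogonality
above, the projection inequality with `y = τ̃ - (1 + x)⁻¹`, and a sign check where `τ̃ < 0`.
-/

variable {ι : Type*}

def isotonicCone (r : ι → ι → Prop) : Set (ι → ℝ) := {τ | ∀ i j, r i j → τ i ≤ τ j}

section isotonicCone

variable {r : ι → ι → Prop}

theorem convex_isotonicCone : Convex ℝ (isotonicCone r) := by
  intro x hx y hy a b ha hb _ i j hij
  simp only [Pi.add_apply, Pi.smul_apply, smul_eq_mul]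
  exact add_le_add (mul_le_mul_of_nonneg_left (hx i j hij) ha)
    (mul_le_mul_of_nonneg_left (hy i j hij) hb)

theorem add_mem_isotonicCone {x y : ι → ℝ} (hx : x ∈ isotonicCone r) (hy : y ∈ isotonicCone r) :
    x + y ∈ isotonicCone r :=
  fun i j hij => add_le_add (hx i j hij) (hy i j hij)

theorem comp_mem_isotonicCone {f : ℝ → ℝ} (hf : Monotone f) {τ : ι → ℝ}
    (hτ : τ ∈ isotonicCone r) : f ∘ τ ∈ isotonicCone r :=
  fun i j hij => hf (hτ i j hij)

theorem neg_inv_one_add_mem_isotonicCone {x : ι → ℝ} (hx0 : ∀ i, 0 ≤ x i)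
    (hx : x ∈ isotonicCone r) : (fun i => -(1 + x i)⁻¹) ∈ isotonicCone r :=
  fun i j hij => neg_le_neg (inv_anti₀ (by linarith [hx0 i]) (by linarith [hx i j hij]))

end isotonicCone

theorem nonpos_of_forall_le_mul {a b : ℝ} (h : ∀ t ∈ Set.Ioc (0 : ℝ) 1, a ≤ t * b) : a ≤ 0 := by
  have hlim : Tendsto (fun t : ℝ => t * b) (𝓝[>] 0) (𝓝 0) := by
    simpa using ((continuous_mul_const b).tendsto (0 : ℝ)).mono_left nhdsWithin_le_nhds
  exact ge_of_tendsto hlim (eventually_of_mem (Ioc_mem_nhdsGT one_pos) h)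

section projection

variable [Fintype ι]

theorem sum_mul_sub_mul_sub_nonpos_of_isMinOn {K : Set (ι → ℝ)} (hK : Convex ℝ K)
    {Q z τ y : ι → ℝ} (hmin : IsMinOn (fun τ => ∑ i, Q i * (z i - τ i) ^ 2) K τ)
    (hτ : τ ∈ K) (hy : y ∈ K) : ∑ i, Q i * (z i - τ i) * (y i - τ i) ≤ 0 := by
  set S := ∑ i, Q i * (z i - τ i) * (y i - τ i)
  set C := ∑ i, Q i * (y i - τ i) ^ 2
  suffices h : ∀ t ∈ Set.Ioc (0 : ℝ) 1, 2 * S ≤ t * C by linarith [nonpos_of_forall_le_mul h]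
  intro t ht
  have hle := isMinOn_iff.mp hmin _ (hK.add_smul_sub_mem hτ hy (Set.Ioc_subset_Icc_self ht))
  have hexpand : ∑ i, Q i * (z i - (τ + t • (y - τ)) i) ^ 2
      = ∑ i, Q i * (z i - τ i) ^ 2 - t * (2 * S - t * C) := by
    simp only [S, C, mul_sum, ← sum_sub_distrib]
    refine sum_congr rfl fun i _ => ?_
    simp only [Pi.add_apply, Pi.smul_apply, Pi.sub_apply, smul_eq_mul]
    ring
  rw [hexpand] at hle
  nlinarith [ht.1]

theorem monotone_add_mul_of_lipschitzWith_one {h : ℝ → ℝ} (hh : LipschitzWith 1 h) {ε : ℝ}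
    (hε : |ε| ≤ 1) : Monotone fun t => t + ε * h t := by
  intro a b hab
  have hdist : |h a - h b| ≤ b - a := by
    simpa [Real.dist_eq, abs_sub_comm a b, abs_of_nonneg (sub_nonneg.mpr hab)]
      using hh.dist_le_mul a b
  have hmul : ε * (h a - h b) ≤ |h a - h b| := (le_abs_self _).trans
    ((abs_mul ε (h a - h b)).trans_le (mul_le_of_le_one_left (abs_nonneg _) hε))
  show a + ε * h a ≤ b + ε * h b
  linarith

theorem sum_mul_sub_mul_comp_eq_zero_of_isMinOn {r : ι → ι → Prop} {Q z τ : ι → ℝ}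
    (hmin : IsMinOn (fun τ => ∑ i, Q i * (z i - τ i) ^ 2) (isotonicCone r) τ)
    (hτ : τ ∈ isotonicCone r) {h : ℝ → ℝ} (hh : LipschitzWith 1 h) :
    ∑ i, Q i * (z i - τ i) * h (τ i) = 0 := by
  have hside : ∀ ε : ℝ, |ε| ≤ 1 → ε * ∑ i, Q i * (z i - τ i) * h (τ i) ≤ 0 := by
    intro ε hε
    have hproj := sum_mul_sub_mul_sub_nonpos_of_isMinOn convex_isotonicCone hmin hτ
      (comp_mem_isotonicCone (monotone_add_mul_of_lipschitzWith_one hh hε) hτ)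
    rw [mul_sum]
    convert hproj using 2 with i
    simp only [Function.comp_apply]
    ring
  linarith [hside 1 (by norm_num), hside (-1) (by norm_num)]

end projection

theorem lipschitzWith_one_inv_one_add_max_zero :
    LipschitzWith 1 fun t : ℝ => (1 + max t 0)⁻¹ := by
  refine LipschitzWith.of_dist_le_mul fun x y => ?_
  have hx : 1 ≤ 1 + max x 0 := le_add_of_nonneg_right (le_max_right x 0)
  have hy : 1 ≤ 1 + max y 0 := le_add_of_nonneg_right (le_max_right y 0)
  have hprod : (1 + max x 0)⁻¹ * (1 + max y 0)⁻¹ ≤ 1 :=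
    mul_le_one₀ (inv_le_one_of_one_le₀ hx) (by positivity) (inv_le_one_of_one_le₀ hy)
  have hsub : (1 + max x 0)⁻¹ - (1 + max y 0)⁻¹
      = (max y 0 - max x 0) * ((1 + max x 0)⁻¹ * (1 + max y 0)⁻¹) := by
    field_simp
    ring
  rw [Real.dist_eq, Real.dist_eq, NNReal.coe_one, one_mul, hsub, abs_mul,
    abs_of_nonneg (by positivity : (0 : ℝ) ≤ (1 + max x 0)⁻¹ * (1 + max y 0)⁻¹), abs_sub_comm]
  exact (mul_le_of_le_one_right (abs_nonneg _) hprod).trans (abs_max_sub_max_le_abs x y 0)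

theorem max_zero_sub_mul_inv_sub_inv_nonneg (t : ℝ) {x : ℝ} (hx : 0 ≤ x) :
    0 ≤ (max t 0 - t) * ((1 + max t 0)⁻¹ - (1 + x)⁻¹) := by
  rcases le_or_gt 0 t with ht | ht
  · simp [max_eq_left ht]
  · rw [max_eq_right ht.le, add_zero, inv_one]
    exact mul_nonneg (by linarith) (sub_nonneg.mpr (inv_le_one_of_one_le₀ (by linarith)))

theorem log_add_div_add_mul_inv_sub_inv_le {a b : ℝ} (ha : 0 < 1 + a) (hb : 0 < 1 + b) (w : ℝ) :
    Real.log (1 + a) + w / (1 + a) + (a - (w - 1)) * ((1 + a)⁻¹ - (1 + b)⁻¹)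
      ≤ Real.log (1 + b) + w / (1 + b) := by
  have hlog := Real.log_le_sub_one_of_pos (div_pos ha hb)
  rw [Real.log_div ha.ne' hb.ne'] at hlog
  have hcross : (a - (w - 1)) * ((1 + a)⁻¹ - (1 + b)⁻¹)
      = 1 - (1 + a) / (1 + b) - w / (1 + a) + w / (1 + b) := by
    field_simp
    ring
  linarith

theorem stmt14_general (p : ℕ) (Q Y σs : Fin p → ℝ) (c : ℝ)
    (hQ : ∀ i, 0 < Q i)
    (τt : Fin p → ℝ)
    (hmem : ∀ i j, σs j ≤ σs i → τt i ≤ τt j)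
    (hmin : IsMinOn (fun τ : Fin p → ℝ => ∑ i, Q i * (((Y i - c / σs i) ^ 2 - 1) - τ i) ^ 2)
      {τ : Fin p → ℝ | ∀ i j, σs j ≤ σs i → τ i ≤ τ j} τt) :
    (fun i => max (τt i) 0) ∈
        {τ : Fin p → ℝ | (∀ i, 0 ≤ τ i) ∧ ∀ i j, σs j ≤ σs i → τ i ≤ τ j} ∧
      IsMinOn
        (fun τ : Fin p → ℝ =>
          ∑ i, Q i * (Real.log (1 + τ i) + (Y i - c / σs i) ^ 2 / (1 + τ i)))
        {τ : Fin p → ℝ | (∀ i, 0 ≤ τ i) ∧ ∀ i j, σs j ≤ σs i → τ i ≤ τ j}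
        (fun i => max (τt i) 0) := by
  set z : Fin p → ℝ := fun i => (Y i - c / σs i) ^ 2 - 1
  have hτt : τt ∈ isotonicCone fun i j => σs j ≤ σs i := hmem
  have horth := sum_mul_sub_mul_comp_eq_zero_of_isMinOn hmin hτt
    lipschitzWith_one_inv_one_add_max_zero
  refine ⟨⟨fun i => le_max_right _ _, comp_mem_isotonicCone (monotone_id.max monotone_const) hτt⟩,
    isMinOn_iff.mpr fun x ⟨hx0, hx⟩ => ?_⟩
  have hproj : ∑ i, Q i * (z i - τt i) * -(1 + x i)⁻¹ ≤ 0 := by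
    simpa only [Pi.add_apply, add_sub_cancel_left] using
      sum_mul_sub_mul_sub_nonpos_of_isMinOn convex_isotonicCone hmin hτt
        (add_mem_isotonicCone hτt (neg_inv_one_add_mem_isotonicCone hx0 hx))
  have hcross : 0 ≤ ∑ i, Q i * (max (τt i) 0 - z i) * ((1 + max (τt i) 0)⁻¹ - (1 + x i)⁻¹) := by
    have hsplit : ∑ i, Q i * (max (τt i) 0 - z i) * ((1 + max (τt i) 0)⁻¹ - (1 + x i)⁻¹)
        = -∑ i, Q i * (z i - τt i) * (1 + max (τt i) 0)⁻¹
          - ∑ i, Q i * (z i - τt i) * -(1 + x i)⁻¹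
          + ∑ i, Q i * ((max (τt i) 0 - τt i) * ((1 + max (τt i) 0)⁻¹ - (1 + x i)⁻¹)) := by
      rw [← sum_neg_distrib, ← sum_sub_distrib, ← sum_add_distrib]
      exact sum_congr rfl fun i _ => by ring
    rw [hsplit, horth]
    have := sum_nonneg fun i (_ : i ∈ univ) => mul_nonneg (hQ i).le
      (max_zero_sub_mul_inv_sub_inv_nonneg (τt i) (hx0 i))
    linarith
  calc _ ≤ _ + _ := le_add_of_nonneg_right hcross
    _ = _ := sum_add_distrib.symm
    _ ≤ _ := sum_le_sum fun i _ => by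
      rw [mul_assoc, ← mul_add]
      exact mul_le_mul_of_nonneg_left (log_add_div_add_mul_inv_sub_inv_le
        (by linarith [le_max_right (τt i) 0]) (by linarith [hx0 i]) _) (hQ i).le

/-- If `τ̃` solves the weighted isotonic least-squares problem with targets
`zᵢ = (Yᵢ − c/σᵢ)² − 1` over the isotonic cone `{τ : σᵢ ≥ σⱼ → τᵢ ≤ τⱼ}`, then
`τ̂ᵢ = max(τ̃ᵢ, 0)` solves the constrained problem
`min ∑ᵢ Qᵢ{log(1+τᵢ) + (Yᵢ − c/σᵢ)²/(1+τᵢ)}` subject to `0 ≤ τᵢ` and the same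
isotonic constraint. -/
theorem stmt14 (p : ℕ) (Q Y σs : Fin p → ℝ) (c : ℝ)
    (hQ : ∀ i, 0 < Q i) (hσ : ∀ i, 0 < σs i)
    (τt : Fin p → ℝ)
    (hmem : ∀ i j, σs j ≤ σs i → τt i ≤ τt j)
    (hmin : IsMinOn (fun τ : Fin p → ℝ => ∑ i, Q i * (((Y i - c / σs i) ^ 2 - 1) - τ i) ^ 2)
      {τ : Fin p → ℝ | ∀ i j, σs j ≤ σs i → τ i ≤ τ j} τt) :
    (fun i => max (τt i) 0) ∈
        {τ : Fin p → ℝ | (∀ i, 0 ≤ τ i) ∧ ∀ i j, σs j ≤ σs i → τ i ≤ τ j} ∧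
      IsMinOn
        (fun τ : Fin p → ℝ =>
          ∑ i, Q i * (Real.log (1 + τ i) + (Y i - c / σs i) ^ 2 / (1 + τ i)))
        {τ : Fin p → ℝ | (∀ i, 0 ≤ τ i) ∧ ∀ i j, σs j ≤ σs i → τ i ≤ τ j}
        (fun i => max (τt i) 0) :=
  stmt14_general p Q Y σs c hQ τt hmem hmin
end
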